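/- Substitution lemma for epsilon semantics: if m is the value of term u in M under choice function Φ and assignment s, then the value of t(u) (the result of substituting u for x in t) equals the value of t(x) under the modified assignment s[x↦m], and M, Φ, s satisfies A(u) if and only if M, Φ, s[x↦m] satisfies A(x). -/
import Mathlib


/-! Syntax of the epsilon calculus: terms and formulas defined simultaneously. -/

mutual
inductive Tm : Type
  | var : ℕ → Tm
  | func : ℕ → List Tm → Tm
  | eps : ℕ → Fm → Tm
inductive Fm : Type
  | falsum : Fm
  | pred : ℕ → List Tm → Fm
  | eq : Tm → Tm → Fm
  | imp : Fm → Fm → Fm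
  | conj : Fm → Fm → Fm
  | disj : Fm → Fm → Fm
  | all : ℕ → Fm → Fm
  | ex : ℕ → Fm → Fm
end

def Fm.not (A : Fm) : Fm := A.imp .falsum
def Fm.iff (A B : Fm) : Fm := (A.imp B).conj (B.imp A)

/-! Free variables. -/
mutual
def Tm.fv : Tm → Finset ℕ
  | .var n => {n}
  | .func _ ts => Tm.fvList ts
  | .eps x A => Fm.fv A \ {x}
def Tm.fvList : List Tm → Finset ℕ
  | [] => ∅
  | t :: ts => Tm.fv t ∪ Tm.fvList ts
def Fm.fv : Fm → Finset ℕ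
  | .falsum => ∅
  | .pred _ ts => Tm.fvList ts
  | .eq t u => Tm.fv t ∪ Tm.fv u
  | .imp A B => Fm.fv A ∪ Fm.fv B
  | .conj A B => Fm.fv A ∪ Fm.fv B
  | .disj A B => Fm.fv A ∪ Fm.fv B
  | .all x A => Fm.fv A \ {x}
  | .ex x A => Fm.fv A \ {x}
end

/-! Simultaneous substitution of terms for variables. -/
mutual
def Tm.substs (σ : ℕ → Tm) : Tm → Tm
  | .var n => σ n
  | .func f ts => .func f (Tm.substsList σ ts)
  | .eps x A => .eps x (Fm.substs (Function.update σ x (.var x)) A)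
def Tm.substsList (σ : ℕ → Tm) : List Tm → List Tm
  | [] => []
  | t :: ts => Tm.substs σ t :: Tm.substsList σ ts
def Fm.substs (σ : ℕ → Tm) : Fm → Fm
  | .falsum => .falsum
  | .pred p ts => .pred p (Tm.substsList σ ts)
  | .eq t u => .eq (Tm.substs σ t) (Tm.substs σ u)
  | .imp A B => .imp (Fm.substs σ A) (Fm.substs σ B)
  | .conj A B => .conj (Fm.substs σ A) (Fm.substs σ B)
  | .disj A B => .disj (Fm.substs σ A) (Fm.substs σ B)
  | .all x A => .all x (Fm.substs (Function.update σ x (.var x)) A)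
  | .ex x A => .ex x (Fm.substs (Function.update σ x (.var x)) A)
end

/-- Substitution of a single term `u` for the variable `x`. -/
def Tm.subst (t : Tm) (x : ℕ) (u : Tm) : Tm :=
  t.substs (fun n => if n = x then u else .var n)
def Fm.subst (A : Fm) (x : ℕ) (u : Tm) : Fm :=
  A.substs (fun n => if n = x then u else .var n)

/-- Propositional evaluation: quantified and atomic formulas are atoms. -/
def Fm.evalP (v : Fm → Bool) : Fm → Bool
  | .falsum => false
  | .imp A B => !(Fm.evalP v A) || Fm.evalP v B
  | .conj A B => Fm.evalP v A && Fm.evalP v B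
  | .disj A B => Fm.evalP v A || Fm.evalP v B
  | A => v A

/-- Propositional tautologies. -/
def Taut (A : Fm) : Prop := ∀ v : Fm → Bool, Fm.evalP v A = true

/-- The elementary calculus EC: tautologies and modus ponens. -/
inductive EC (Γ : Set Fm) : Fm → Prop
  | hyp {A} : A ∈ Γ → EC Γ A
  | taut {A} : Taut A → EC Γ A
  | mp {A B} : EC Γ (A.imp B) → EC Γ A → EC Γ B

/-- The (intensional) epsilon calculus EC_ε: tautologies, critical formulas, MP. -/
inductive ECe (Γ : Set Fm) : Fm → Prop
  | hyp {A} : A ∈ Γ → ECe Γ A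
  | taut {A} : Taut A → ECe Γ A
  | crit (A : Fm) (x : ℕ) (t : Tm) :
      ECe Γ ((A.subst x t).imp (A.subst x (.eps x A)))
  | mp {A B} : ECe Γ (A.imp B) → ECe Γ A → ECe Γ B

/-- The epsilon calculus with identity EC_ε^=. -/
inductive ECeq (Γ : Set Fm) : Fm → Prop
  | hyp {A} : A ∈ Γ → ECeq Γ A
  | taut {A} : Taut A → ECeq Γ A
  | crit (A : Fm) (x : ℕ) (t : Tm) :
      ECeq Γ ((A.subst x t).imp (A.subst x (.eps x A)))
  | refl (t : Tm) : ECeq Γ (.eq t t)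
  | eqsub (t u : Tm) (x : ℕ) (A : Fm) :
      ECeq Γ ((Fm.eq t u).imp ((A.subst x t).iff (A.subst x u)))
  | mp {A B} : ECeq Γ (A.imp B) → ECeq Γ A → ECeq Γ B

/-- A sentence is a formula with no free variables. -/
def Fm.sentence (A : Fm) : Prop := A.fv = ∅

/-! Extensional choice-function semantics. -/

structure Struc where
  D : Type
  hne : Nonempty D
  fn : ℕ → List D → D
  pr : ℕ → List D → Prop

/-- An extensional choice function on a structure. -/
def ChoiceFn (M : Struc) (Φ : Set M.D → M.D) : Prop :=
  ∀ X : Set M.D, X.Nonempty → Φ X ∈ X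

mutual
def Tm.val (M : Struc) (Φ : Set M.D → M.D) (s : ℕ → M.D) : Tm → M.D
  | .var n => s n
  | .func f ts => M.fn f (Tm.valList M Φ s ts)
  | .eps x A => Φ {m : M.D | Fm.sat M Φ (Function.update s x m) A}
def Tm.valList (M : Struc) (Φ : Set M.D → M.D) (s : ℕ → M.D) : List Tm → List M.D
  | [] => []
  | t :: ts => Tm.val M Φ s t :: Tm.valList M Φ s ts
def Fm.sat (M : Struc) (Φ : Set M.D → M.D) (s : ℕ → M.D) : Fm → Prop
  | .falsum => False
  | .pred p ts => M.pr p (Tm.valList M Φ s ts)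
  | .eq t u => Tm.val M Φ s t = Tm.val M Φ s u
  | .imp A B => Fm.sat M Φ s A → Fm.sat M Φ s B
  | .conj A B => Fm.sat M Φ s A ∧ Fm.sat M Φ s B
  | .disj A B => Fm.sat M Φ s A ∨ Fm.sat M Φ s B
  | .all x A => ∀ m : M.D, Fm.sat M Φ (Function.update s x m) A
  | .ex x A => ∃ m : M.D, Fm.sat M Φ (Function.update s x m) A
end

/-- Truth in a structure w.r.t. a choice function: satisfaction under all assignments. -/
def TrueIn (M : Struc) (Φ : Set M.D → M.D) (A : Fm) : Prop :=
  ∀ s : ℕ → M.D, Fm.sat M Φ s A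

/-! ε-free and quantifier-free formulas. -/

mutual
def Tm.epsFree : Tm → Prop
  | .var _ => True
  | .func _ ts => Tm.epsFreeList ts
  | .eps _ _ => False
def Tm.epsFreeList : List Tm → Prop
  | [] => True
  | t :: ts => Tm.epsFree t ∧ Tm.epsFreeList ts
def Fm.epsFree : Fm → Prop
  | .falsum => True
  | .pred _ ts => Tm.epsFreeList ts
  | .eq t u => Tm.epsFree t ∧ Tm.epsFree u
  | .imp A B => Fm.epsFree A ∧ Fm.epsFree B
  | .conj A B => Fm.epsFree A ∧ Fm.epsFree B
  | .disj A B => Fm.epsFree A ∧ Fm.epsFree B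
  | .all _ A => Fm.epsFree A
  | .ex _ A => Fm.epsFree A
end

mutual
def Tm.qFree : Tm → Prop
  | .var _ => True
  | .func _ ts => Tm.qFreeList ts
  | .eps _ A => Fm.qFree A
def Tm.qFreeList : List Tm → Prop
  | [] => True
  | t :: ts => Tm.qFree t ∧ Tm.qFreeList ts
def Fm.qFree : Fm → Prop
  | .falsum => True
  | .pred _ ts => Tm.qFreeList ts
  | .eq t u => Tm.qFree t ∧ Tm.qFree u
  | .imp A B => Fm.qFree A ∧ Fm.qFree B
  | .conj A B => Fm.qFree A ∧ Fm.qFree B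
  | .disj A B => Fm.qFree A ∧ Fm.qFree B
  | .all _ _ => False
  | .ex _ _ => False
end

/-! "u is free for x": no free occurrence of x lies in the scope of a binder
capturing a variable of u. -/
mutual
def Tm.freeFor (x : ℕ) (u : Tm) : Tm → Prop
  | .var _ => True
  | .func _ ts => Tm.freeForList x u ts
  | .eps y A => x ∉ Tm.fv (.eps y A) ∨ (y ∉ u.fv ∧ Fm.freeFor x u A)
def Tm.freeForList (x : ℕ) (u : Tm) : List Tm → Prop
  | [] => True
  | t :: ts => Tm.freeFor x u t ∧ Tm.freeForList x u ts
def Fm.freeFor (x : ℕ) (u : Tm) : Fm → Prop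
  | .falsum => True
  | .pred _ ts => Tm.freeForList x u ts
  | .eq t v => Tm.freeFor x u t ∧ Tm.freeFor x u v
  | .imp A B => Fm.freeFor x u A ∧ Fm.freeFor x u B
  | .conj A B => Fm.freeFor x u A ∧ Fm.freeFor x u B
  | .disj A B => Fm.freeFor x u A ∧ Fm.freeFor x u B
  | .all y A => x ∉ Fm.fv (.all y A) ∨ (y ∉ u.fv ∧ Fm.freeFor x u A)
  | .ex y A => x ∉ Fm.fv (.ex y A) ∨ (y ∉ u.fv ∧ Fm.freeFor x u A)
end

/-! Auxiliary lemmas for the substitution lemma. -/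

mutual
theorem Tm.val_coincide (M : Struc) (Φ : Set M.D → M.D) :
    ∀ (t : Tm) (s s' : ℕ → M.D), (∀ n ∈ t.fv, s n = s' n) →
      Tm.val M Φ s t = Tm.val M Φ s' t
  | .var n, s, s', h => h n (by simp [Tm.fv])
  | .func f ts, s, s', h => by
      simp only [Tm.val]
      rw [Tm.valList_coincide M Φ ts s s' (by simpa [Tm.fv] using h)]
  | .eps x A, s, s', h => by
      simp only [Tm.val]
      congr 1
      ext mm
      constructor <;> intro hs
      · exact (Fm.sat_coincide M Φ A _ _ (by
          intro n hn
          rcases eq_or_ne n x with rfl | hne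
          · simp [Function.update]
          · simp only [Function.update_of_ne hne]
            exact h n (by simp [Tm.fv, hn, hne]))).mp hs
      · exact (Fm.sat_coincide M Φ A _ _ (by
          intro n hn
          rcases eq_or_ne n x with rfl | hne
          · simp [Function.update]
          · simp only [Function.update_of_ne hne]
            exact (h n (by simp [Tm.fv, hn, hne])).symm)).mp hs
theorem Tm.valList_coincide (M : Struc) (Φ : Set M.D → M.D) :
    ∀ (ts : List Tm) (s s' : ℕ → M.D), (∀ n ∈ Tm.fvList ts, s n = s' n) →
      Tm.valList M Φ s ts = Tm.valList M Φ s' ts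
  | [], _, _, _ => rfl
  | t :: ts, s, s', h => by
      simp only [Tm.valList]
      rw [Tm.val_coincide M Φ t s s' (fun n hn => h n (by simp [Tm.fvList, hn])),
        Tm.valList_coincide M Φ ts s s' (fun n hn => h n (by simp [Tm.fvList, hn]))]
theorem Fm.sat_coincide (M : Struc) (Φ : Set M.D → M.D) :
    ∀ (A : Fm) (s s' : ℕ → M.D), (∀ n ∈ A.fv, s n = s' n) →
      (Fm.sat M Φ s A ↔ Fm.sat M Φ s' A)
  | .falsum, _, _, _ => Iff.rfl
  | .pred p ts, s, s', h => by
      simp only [Fm.sat]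
      rw [Tm.valList_coincide M Φ ts s s' (by simpa [Fm.fv] using h)]
  | .eq t v, s, s', h => by
      simp only [Fm.sat]
      rw [Tm.val_coincide M Φ t s s' (fun n hn => h n (by simp [Fm.fv, hn])),
        Tm.val_coincide M Φ v s s' (fun n hn => h n (by simp [Fm.fv, hn]))]
  | .imp A B, s, s', h => by
      simp only [Fm.sat]
      rw [Fm.sat_coincide M Φ A s s' (fun n hn => h n (by simp [Fm.fv, hn])),
        Fm.sat_coincide M Φ B s s' (fun n hn => h n (by simp [Fm.fv, hn]))]
  | .conj A B, s, s', h => by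
      simp only [Fm.sat]
      rw [Fm.sat_coincide M Φ A s s' (fun n hn => h n (by simp [Fm.fv, hn])),
        Fm.sat_coincide M Φ B s s' (fun n hn => h n (by simp [Fm.fv, hn]))]
  | .disj A B, s, s', h => by
      simp only [Fm.sat]
      rw [Fm.sat_coincide M Φ A s s' (fun n hn => h n (by simp [Fm.fv, hn])),
        Fm.sat_coincide M Φ B s s' (fun n hn => h n (by simp [Fm.fv, hn]))]
  | .all x A, s, s', h => by
      simp only [Fm.sat]
      apply forall_congr'
      intro mm
      exact Fm.sat_coincide M Φ A _ _ (by
        intro n hn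
        rcases eq_or_ne n x with rfl | hne
        · simp [Function.update]
        · simp only [Function.update_of_ne hne]
          exact h n (by simp [Fm.fv, hn, hne]))
  | .ex x A, s, s', h => by
      simp only [Fm.sat]
      apply exists_congr
      intro mm
      exact Fm.sat_coincide M Φ A _ _ (by
        intro n hn
        rcases eq_or_ne n x with rfl | hne
        · simp [Function.update]
        · simp only [Function.update_of_ne hne]
          exact h n (by simp [Fm.fv, hn, hne]))
end

mutual
theorem Tm.substs_triv : ∀ (t : Tm) (σ : ℕ → Tm), (∀ n ∈ t.fv, σ n = .var n) →
    Tm.substs σ t = t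
  | .var n, σ, h => h n (by simp [Tm.fv])
  | .func f ts, σ, h => by
      simp only [Tm.substs]
      rw [Tm.substsList_triv ts σ (by simpa [Tm.fv] using h)]
  | .eps x A, σ, h => by
      simp only [Tm.substs]
      rw [Fm.substs_triv A _ (by
        intro n hn
        rcases eq_or_ne n x with rfl | hne
        · simp
        · rw [Function.update_of_ne hne]
          exact h n (by simp [Tm.fv, hn, hne]))]
theorem Tm.substsList_triv : ∀ (ts : List Tm) (σ : ℕ → Tm),
    (∀ n ∈ Tm.fvList ts, σ n = .var n) → Tm.substsList σ ts = ts
  | [], _, _ => rfl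
  | t :: ts, σ, h => by
      simp only [Tm.substsList]
      rw [Tm.substs_triv t σ (fun n hn => h n (by simp [Tm.fvList, hn])),
        Tm.substsList_triv ts σ (fun n hn => h n (by simp [Tm.fvList, hn]))]
theorem Fm.substs_triv : ∀ (A : Fm) (σ : ℕ → Tm), (∀ n ∈ A.fv, σ n = .var n) →
    Fm.substs σ A = A
  | .falsum, _, _ => rfl
  | .pred p ts, σ, h => by
      simp only [Fm.substs]
      rw [Tm.substsList_triv ts σ (by simpa [Fm.fv] using h)]
  | .eq t v, σ, h => by
      simp only [Fm.substs]
      rw [Tm.substs_triv t σ (fun n hn => h n (by simp [Fm.fv, hn])),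
        Tm.substs_triv v σ (fun n hn => h n (by simp [Fm.fv, hn]))]
  | .imp A B, σ, h => by
      simp only [Fm.substs]
      rw [Fm.substs_triv A σ (fun n hn => h n (by simp [Fm.fv, hn])),
        Fm.substs_triv B σ (fun n hn => h n (by simp [Fm.fv, hn]))]
  | .conj A B, σ, h => by
      simp only [Fm.substs]
      rw [Fm.substs_triv A σ (fun n hn => h n (by simp [Fm.fv, hn])),
        Fm.substs_triv B σ (fun n hn => h n (by simp [Fm.fv, hn]))]
  | .disj A B, σ, h => by
      simp only [Fm.substs]
      rw [Fm.substs_triv A σ (fun n hn => h n (by simp [Fm.fv, hn])),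
        Fm.substs_triv B σ (fun n hn => h n (by simp [Fm.fv, hn]))]
  | .all x A, σ, h => by
      simp only [Fm.substs]
      rw [Fm.substs_triv A _ (by
        intro n hn
        rcases eq_or_ne n x with rfl | hne
        · simp
        · rw [Function.update_of_ne hne]
          exact h n (by simp [Fm.fv, hn, hne]))]
  | .ex x A, σ, h => by
      simp only [Fm.substs]
      rw [Fm.substs_triv A _ (by
        intro n hn
        rcases eq_or_ne n x with rfl | hne
        · simp
        · rw [Function.update_of_ne hne]
          exact h n (by simp [Fm.fv, hn, hne]))]
end

theorem sigma_update_self (x y : ℕ) (u : Tm) (h : y ≠ x) :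
    Function.update (fun n => if n = x then u else Tm.var n) y (.var y)
      = (fun n => if n = x then u else Tm.var n) := by
  funext n
  rcases eq_or_ne n y with rfl | hn
  · simp [h]
  · simp [Function.update_of_ne hn]

theorem sigma_update_var (x : ℕ) (u : Tm) :
    Function.update (fun n => if n = x then u else Tm.var n) x (.var x) = Tm.var := by
  funext n
  rcases eq_or_ne n x with rfl | hn
  · simp
  · simp [Function.update_of_ne hn, hn]

mutual
theorem Tm.subst_val (M : Struc) (Φ : Set M.D → M.D) (x : ℕ) (u : Tm) :
    ∀ (t : Tm) (s : ℕ → M.D), Tm.freeFor x u t →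
      Tm.val M Φ s (Tm.substs (fun n => if n = x then u else Tm.var n) t)
        = Tm.val M Φ (Function.update s x (Tm.val M Φ s u)) t
  | .var n, s, _ => by
      rcases eq_or_ne n x with rfl | hn
      · simp [Tm.substs, Tm.val]
      · simp [Tm.subst, Tm.substs, Tm.val, hn, Function.update_of_ne hn]
  | .func f ts, s, h => by
      simp only [Tm.substs, Tm.val]
      rw [show Tm.substsList (fun n => if n = x then u else Tm.var n) ts
            = Tm.substsList (fun n => if n = x then u else Tm.var n) ts from rfl]
      rw [Tm.substList_val M Φ x u ts s (by simpa [Tm.freeFor] using h)]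
  | .eps y A, s, h => by
      simp only [Tm.substs, Tm.val]
      rcases eq_or_ne y x with rfl | hyx
      · rw [sigma_update_var, Fm.substs_triv A _ (fun _ _ => rfl)]
        congr 1
        ext mm
        simp [Function.update_idem]
      · rw [sigma_update_self x y u hyx]
        rcases h with hnfv | ⟨hyu, hfA⟩
        · have hxA : x ∉ A.fv := by
            intro hx
            exact hnfv (by simp [Tm.fv, hx, Ne.symm hyx])
          rw [show Fm.substs (fun n => if n = x then u else Tm.var n) A = A from
            Fm.substs_triv A _ (fun n hn => by
              simp [show n ≠ x from fun e => hxA (e ▸ hn)])]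
          congr 1
          ext mm
          constructor <;> intro hs <;>
            [exact (Fm.sat_coincide M Φ A _ _ (fun n hn => by
              rcases eq_or_ne n y with rfl | hny
              · simp
              · simp [Function.update_of_ne hny,
                  Function.update_of_ne (show n ≠ x from fun e => hxA (e ▸ hn))])).mp hs;
             exact (Fm.sat_coincide M Φ A _ _ (fun n hn => by
              rcases eq_or_ne n y with rfl | hny
              · simp
              · simp [Function.update_of_ne hny,
                  Function.update_of_ne (show n ≠ x from fun e => hxA (e ▸ hn))])).mpr hs]
        · congr 1
          ext mm
          have hval : Tm.val M Φ (Function.update s y mm) u = Tm.val M Φ s u :=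
            Tm.val_coincide M Φ u _ _ (fun n hn => by
              rw [Function.update_of_ne (show n ≠ y from fun e => hyu (e ▸ hn))])
          constructor <;> intro hs
          · have := (Fm.sat_val M Φ x u A (Function.update s y mm) hfA).mp hs
            rw [hval, Function.update_comm hyx] at this
            exact this
          · apply (Fm.sat_val M Φ x u A (Function.update s y mm) hfA).mpr
            rw [hval, Function.update_comm hyx]
            exact hs
theorem Tm.substList_val (M : Struc) (Φ : Set M.D → M.D) (x : ℕ) (u : Tm) :
    ∀ (ts : List Tm) (s : ℕ → M.D), Tm.freeForList x u ts →
      Tm.valList M Φ s (Tm.substsList (fun n => if n = x then u else Tm.var n) ts)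
        = Tm.valList M Φ (Function.update s x (Tm.val M Φ s u)) ts
  | [], _, _ => rfl
  | t :: ts, s, h => by
      simp only [Tm.substsList, Tm.valList]
      rw [Tm.subst_val M Φ x u t s h.1, Tm.substList_val M Φ x u ts s h.2]
theorem Fm.sat_val (M : Struc) (Φ : Set M.D → M.D) (x : ℕ) (u : Tm) :
    ∀ (A : Fm) (s : ℕ → M.D), Fm.freeFor x u A →
      (Fm.sat M Φ s (Fm.substs (fun n => if n = x then u else Tm.var n) A)
        ↔ Fm.sat M Φ (Function.update s x (Tm.val M Φ s u)) A)
  | .falsum, _, _ => Iff.rfl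
  | .pred p ts, s, h => by
      simp only [Fm.substs, Fm.sat]
      rw [Tm.substList_val M Φ x u ts s (by simpa [Fm.freeFor] using h)]
  | .eq t v, s, h => by
      simp only [Fm.substs, Fm.sat]
      rw [Tm.subst_val M Φ x u t s h.1, Tm.subst_val M Φ x u v s h.2]
  | .imp A B, s, h => by
      simp only [Fm.substs, Fm.sat]
      rw [Fm.sat_val M Φ x u A s h.1, Fm.sat_val M Φ x u B s h.2]
  | .conj A B, s, h => by
      simp only [Fm.substs, Fm.sat]
      rw [Fm.sat_val M Φ x u A s h.1, Fm.sat_val M Φ x u B s h.2]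
  | .disj A B, s, h => by
      simp only [Fm.substs, Fm.sat]
      rw [Fm.sat_val M Φ x u A s h.1, Fm.sat_val M Φ x u B s h.2]
  | .all y A, s, h => by
      simp only [Fm.substs, Fm.sat]
      rcases eq_or_ne y x with rfl | hyx
      · rw [sigma_update_var, Fm.substs_triv A _ (fun _ _ => rfl)]
        apply forall_congr'
        intro mm
        rw [Function.update_idem]
      · rw [sigma_update_self x y u hyx]
        rcases h with hnfv | ⟨hyu, hfA⟩
        · have hxA : x ∉ A.fv := by
            intro hx
            exact hnfv (by simp [Fm.fv, hx, Ne.symm hyx])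
          rw [show Fm.substs (fun n => if n = x then u else Tm.var n) A = A from
            Fm.substs_triv A _ (fun n hn => by
              simp [show n ≠ x from fun e => hxA (e ▸ hn)])]
          apply forall_congr'
          intro mm
          exact Fm.sat_coincide M Φ A _ _ (fun n hn => by
            rcases eq_or_ne n y with rfl | hny
            · simp
            · simp [Function.update_of_ne hny,
                Function.update_of_ne (show n ≠ x from fun e => hxA (e ▸ hn))])
        · apply forall_congr'
          intro mm
          have hval : Tm.val M Φ (Function.update s y mm) u = Tm.val M Φ s u :=
            Tm.val_coincide M Φ u _ _ (fun n hn => by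
              rw [Function.update_of_ne (show n ≠ y from fun e => hyu (e ▸ hn))])
          rw [Fm.sat_val M Φ x u A (Function.update s y mm) hfA, hval,
            Function.update_comm hyx]
  | .ex y A, s, h => by
      simp only [Fm.substs, Fm.sat]
      rcases eq_or_ne y x with rfl | hyx
      · rw [sigma_update_var, Fm.substs_triv A _ (fun _ _ => rfl)]
        apply exists_congr
        intro mm
        rw [Function.update_idem]
      · rw [sigma_update_self x y u hyx]
        rcases h with hnfv | ⟨hyu, hfA⟩
        · have hxA : x ∉ A.fv := by
            intro hx
            exact hnfv (by simp [Fm.fv, hx, Ne.symm hyx])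
          rw [show Fm.substs (fun n => if n = x then u else Tm.var n) A = A from
            Fm.substs_triv A _ (fun n hn => by
              simp [show n ≠ x from fun e => hxA (e ▸ hn)])]
          apply exists_congr
          intro mm
          exact Fm.sat_coincide M Φ A _ _ (fun n hn => by
            rcases eq_or_ne n y with rfl | hny
            · simp
            · simp [Function.update_of_ne hny,
                Function.update_of_ne (show n ≠ x from fun e => hxA (e ▸ hn))])
        · apply exists_congr
          intro mm
          have hval : Tm.val M Φ (Function.update s y mm) u = Tm.val M Φ s u :=
            Tm.val_coincide M Φ u _ _ (fun n hn => by
              rw [Function.update_of_ne (show n ≠ y from fun e => hyu (e ▸ hn))])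
          rw [Fm.sat_val M Φ x u A (Function.update s y mm) hfA, hval,
            Function.update_comm hyx]
end

/-- Substitution lemma for epsilon semantics. -/
theorem substitution_lemma (M : Struc) (Φ : Set M.D → M.D) (s : ℕ → M.D)
    (x : ℕ) (u : Tm) (m : M.D) (hm : m = Tm.val M Φ s u) :
    (∀ t : Tm, Tm.freeFor x u t →
      Tm.val M Φ s (t.subst x u) = Tm.val M Φ (Function.update s x m) t) ∧
    (∀ A : Fm, Fm.freeFor x u A →
      (Fm.sat M Φ s (A.subst x u) ↔ Fm.sat M Φ (Function.update s x m) A)) := by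
  subst hm
  exact ⟨fun t ht => Tm.subst_val M Φ x u t s ht,
         fun A hA => Fm.sat_val M Φ x u A s hA⟩
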